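/- Define coefficients c_{n, n-2q} for integers n ≥ 1 and 0 ≤ q ≤ ⌊n/2⌋ recursively by c_{n,n} = 1 and c_{n, n-2q} = (n - 2q + 1) c_{n-1, n-2q+1} + c_{n-1, n-2q-1}. Let L = t(∂²_x - ∂_x) and note ∂_σ u^BS = σ L u^BS for the Black-Scholes price. Then for every n ≥ 1: ∂_σ^n u^BS(t,x,σ) = Σ_{q=0}^{⌊n/2⌋} c_{n, n-2q} σ^{n-2q} L^{n-q} u^BS(t,x,σ). -/

import Mathlib

open MeasureTheory

/-- Standard normal cumulative distribution function. -/
noncomputable def stdNormalCDF (y : ℝ) : ℝ :=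
  ∫ s in Set.Iic y, Real.exp (-s ^ 2 / 2) / Real.sqrt (2 * Real.pi)

/-- Black-Scholes call price `u^BS(t,x,σ)` with log-strike `ζ`. -/
noncomputable def uBS (ζ t x σ : ℝ) : ℝ :=
  Real.exp x * stdNormalCDF ((x - ζ + σ ^ 2 * t / 2) / (σ * Real.sqrt t)) -
    Real.exp ζ * stdNormalCDF ((x - ζ - σ ^ 2 * t / 2) / (σ * Real.sqrt t))

/-- The coefficients `c_{n, n-2q}` (here `ccoef n q := c_{n, n-2q}`), defined by
`c_{n,n} = 1` and `c_{n, n-2q} = (n - 2q + 1) c_{n-1, n-2q+1} + c_{n-1, n-2q-1}`,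
with the convention that out-of-range coefficients vanish. -/
noncomputable def ccoef : ℕ → ℕ → ℝ
  | _, 0 => 1
  | 0, _ + 1 => 0
  | n + 1, q + 1 =>
      if q + 1 ≤ (n + 1) / 2 then
        ((n : ℝ) + 1 - 2 * (q + 1) + 1) * ccoef n q + ccoef n (q + 1)
      else 0

/-- The operator `L = t(∂²_x - ∂_x)` acting on functions of `x`. -/
noncomputable def Lop (t : ℝ) (f : ℝ → ℝ) : ℝ → ℝ :=
  fun x => t * (iteratedDeriv 2 f x - deriv f x)


/-!
By the Vega-Gamma relation `∂_σ u = σ L u`, and because `∂_σ` commutes with `L` (Schwarz's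
theorem: `u` is smooth in `(x, σ)` on `σ > 0`), `∂_σ Lᵏ u = Lᵏ ∂_σ u = σ Lᵏ⁺¹ u`. Differentiating
`∑_q c_{n,n-2q} σ^{n-2q} L^{n-q} u` term by term therefore gives a sum of the same shape, whose
coefficients satisfy exactly the recursion defining `c_{n+1, ·}`.
-/

open Set Filter Topology Function
open scoped ContDiff

section PartialDerivatives

lemma HasFDerivAt.hasDerivAt_fst {E : Type*} [NormedAddCommGroup E] [NormedSpace ℝ E]
    {Φ : ℝ × ℝ → E} {Φ' : ℝ × ℝ →L[ℝ] E} {x s : ℝ} (h : HasFDerivAt Φ Φ' (x, s)) :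
    HasDerivAt (fun x' => Φ (x', s)) (Φ' (1, 0)) x :=
  h.comp_hasDerivAt (f := fun x' => (x', s)) x ((hasDerivAt_id x).prodMk (hasDerivAt_const x s))

lemma HasFDerivAt.hasDerivAt_snd {E : Type*} [NormedAddCommGroup E] [NormedSpace ℝ E]
    {Φ : ℝ × ℝ → E} {Φ' : ℝ × ℝ →L[ℝ] E} {x s : ℝ} (h : HasFDerivAt Φ Φ' (x, s)) :
    HasDerivAt (fun s' => Φ (x, s')) (Φ' (0, 1)) s :=
  h.comp_hasDerivAt (f := fun s' => (x, s')) s ((hasDerivAt_const s x).prodMk (hasDerivAt_id s))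

variable {G : ℝ → ℝ → ℝ} {V : Set ℝ}
  (hG : ContDiffOn ℝ ∞ (uncurry G) (univ ×ˢ V)) (hV : IsOpen V)
include hG hV

lemma contDiffAt_of_contDiffOn_univ_prod {x s : ℝ} (hs : s ∈ V) :
    ContDiffAt ℝ ∞ (uncurry G) (x, s) :=
  hG.contDiffAt ((isOpen_univ.prod hV).mem_nhds ⟨mem_univ x, hs⟩)

lemma deriv_fst_eq_fderiv {x s : ℝ} (hs : s ∈ V) :
    deriv (G · s) x = fderiv ℝ (uncurry G) (x, s) (1, 0) :=
  ((contDiffAt_of_contDiffOn_univ_prod hG hV hs).differentiableAt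
    (by simp)).hasFDerivAt.hasDerivAt_fst.deriv

lemma deriv_snd_eq_fderiv {x s : ℝ} (hs : s ∈ V) :
    deriv (G x ·) s = fderiv ℝ (uncurry G) (x, s) (0, 1) :=
  ((contDiffAt_of_contDiffOn_univ_prod hG hV hs).differentiableAt
    (by simp)).hasFDerivAt.hasDerivAt_snd.deriv

lemma contDiffOn_deriv_fst :
    ContDiffOn ℝ ∞ (uncurry fun x s => deriv (G · s) x) (univ ×ˢ V) :=
  ((hG.fderiv_of_isOpen (isOpen_univ.prod hV) (m := ∞) (by simp)).clm_apply
    contDiffOn_const).congr fun p hp => deriv_fst_eq_fderiv hG hV hp.2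

lemma hasDerivAt_snd_deriv_fst {x s : ℝ} (hs : s ∈ V) :
    HasDerivAt (fun s' => deriv (G · s') x) (deriv (fun x' => deriv (G x' ·) s) x) s := by
  have hGs := contDiffAt_of_contDiffOn_univ_prod hG hV (x := x) hs
  have h2 : HasFDerivAt (fderiv ℝ (uncurry G)) (fderiv ℝ (fderiv ℝ (uncurry G)) (x, s)) (x, s) :=
    ((hGs.fderiv_right (m := 1) (WithTop.coe_le_coe.2 le_top)).differentiableAt
      (by simp)).hasFDerivAt
  have hsnd : (fun x' => deriv (G x' ·) s) = fun x' => fderiv ℝ (uncurry G) (x', s) (0, 1) :=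
    funext fun x' => deriv_snd_eq_fderiv hG hV hs
  have hfst : (fun s' => deriv (G · s') x) =ᶠ[𝓝 s]
      fun s' => fderiv ℝ (uncurry G) (x, s') (1, 0) :=
    eventually_of_mem (hV.mem_nhds hs) fun s' hs' => deriv_fst_eq_fderiv hG hV hs'
  rw [hsnd, (h2.hasDerivAt_fst.clm_apply (hasDerivAt_const x ((0 : ℝ), (1 : ℝ)))).deriv]
  refine ((h2.hasDerivAt_snd.clm_apply (hasDerivAt_const s ((1 : ℝ), (0 : ℝ))))
    |>.congr_of_eventuallyEq hfst).congr_deriv ?_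
  simpa using (hGs.isSymmSndFDerivAt (by simpa using ENat.LEInfty.out)) (0, 1) (1, 0)

end PartialDerivatives

section LOperator

variable (t : ℝ) {G : ℝ → ℝ → ℝ} {V : Set ℝ}

lemma Lop_apply (f : ℝ → ℝ) (x : ℝ) : Lop t f x = t * (deriv (deriv f) x - deriv f x) := by
  rw [Lop, iteratedDeriv_succ, iteratedDeriv_one]

lemma Lop_const_mul (c : ℝ) (f : ℝ → ℝ) :
    Lop t (fun x => c * f x) = fun x => c * Lop t f x := by
  funext x
  simp only [Lop_apply, deriv_const_mul_field']
  ring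

lemma iterate_Lop_const_mul (c : ℝ) (f : ℝ → ℝ) (k : ℕ) :
    (Lop t)^[k] (fun x => c * f x) = fun x => c * (Lop t)^[k] f x := by
  induction k with
  | zero => rfl
  | succ k ih => rw [iterate_succ_apply', ih, Lop_const_mul, iterate_succ_apply']

variable {t} (hG : ContDiffOn ℝ ∞ (uncurry G) (univ ×ˢ V)) (hV : IsOpen V)
include hG hV

lemma contDiffOn_Lop : ContDiffOn ℝ ∞ (uncurry fun x s => Lop t (G · s) x) (univ ×ˢ V) := by
  simp only [Lop_apply]
  have h1 := contDiffOn_deriv_fst hG hV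
  exact contDiffOn_const.mul ((contDiffOn_deriv_fst h1 hV).sub h1)

lemma hasDerivAt_snd_Lop {x s : ℝ} (hs : s ∈ V) :
    HasDerivAt (fun s' => Lop t (G · s') x) (Lop t (fun x' => deriv (G x' ·) s) x) s := by
  have hcomm : (fun x' => deriv (fun s' => deriv (G · s') x') s) =
      deriv (fun x' => deriv (G x' ·) s) :=
    funext fun x' => (hasDerivAt_snd_deriv_fst hG hV hs).deriv
  simp only [Lop_apply]
  have h := ((hasDerivAt_snd_deriv_fst (contDiffOn_deriv_fst hG hV) hV (x := x) hs).sub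
    (hasDerivAt_snd_deriv_fst hG hV (x := x) hs)).const_mul t
  rwa [hcomm] at h

lemma hasDerivAt_snd_iterate_Lop (k : ℕ) {x s : ℝ} (hs : s ∈ V) :
    HasDerivAt (fun s' => (Lop t)^[k] (G · s') x)
      ((Lop t)^[k] (fun x' => deriv (G x' ·) s) x) s := by
  induction k generalizing G with
  | zero => exact ((contDiffAt_of_contDiffOn_univ_prod hG hV hs).differentiableAt
      (by simp)).hasFDerivAt.hasDerivAt_snd.differentiableAt.hasDerivAt
  | succ k ih =>
    have h := ih (contDiffOn_Lop (t := t) hG hV)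
    rwa [funext fun x' => (hasDerivAt_snd_Lop hG hV (x := x') hs).deriv,
      ← iterate_succ_apply] at h

end LOperator

section BlackScholes

noncomputable def stdNormalPDF (y : ℝ) : ℝ := Real.exp (-y ^ 2 / 2) / Real.sqrt (2 * Real.pi)

lemma integrable_stdNormalPDF : Integrable stdNormalPDF := by
  refine ((integrable_exp_neg_mul_sq (b := 1 / 2) (by norm_num)).div_const
    (Real.sqrt (2 * Real.pi))).congr (Eventually.of_forall fun y => ?_)
  simp only [stdNormalPDF]
  ring_nf

lemma continuous_stdNormalPDF : Continuous stdNormalPDF := by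
  unfold stdNormalPDF; fun_prop

lemma hasDerivAt_stdNormalCDF (y : ℝ) : HasDerivAt stdNormalCDF (stdNormalPDF y) y := by
  have h : stdNormalCDF = fun y => stdNormalCDF 0 + ∫ s in (0 : ℝ)..y, stdNormalPDF s := by
    funext z
    rw [eq_comm, add_comm]
    rw [← intervalIntegral.integral_Iic_sub_Iic integrable_stdNormalPDF.integrableOn
      integrable_stdNormalPDF.integrableOn]
    unfold stdNormalCDF stdNormalPDF
    ring
  rw [h]
  exact (intervalIntegral.integral_hasDerivAt_right integrable_stdNormalPDF.intervalIntegrable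
    (continuous_stdNormalPDF.stronglyMeasurableAtFilter _ _)
    continuous_stdNormalPDF.continuousAt).const_add _

lemma HasDerivAt.stdNormalCDF {f : ℝ → ℝ} {f' x : ℝ} (hf : HasDerivAt f f' x) :
    HasDerivAt (fun y => _root_.stdNormalCDF (f y)) (stdNormalPDF (f x) * f') x :=
  (hasDerivAt_stdNormalCDF (f x)).comp x hf

lemma contDiff_stdNormalCDF : ContDiff ℝ ∞ stdNormalCDF := by
  have hderiv : deriv stdNormalCDF = stdNormalPDF :=
    funext fun y => (hasDerivAt_stdNormalCDF y).deriv
  refine contDiff_infty_iff_deriv.2 ⟨fun y => (hasDerivAt_stdNormalCDF y).differentiableAt, ?_⟩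
  rw [hderiv]
  unfold stdNormalPDF
  fun_prop

noncomputable def dPlus (ζ t x σ : ℝ) : ℝ := (x - ζ + σ ^ 2 * t / 2) / (σ * Real.sqrt t)

noncomputable def dMinus (ζ t x σ : ℝ) : ℝ := (x - ζ - σ ^ 2 * t / 2) / (σ * Real.sqrt t)

variable {ζ t x σ : ℝ}

lemma exp_mul_stdNormalPDF_dMinus (ht : 0 < t) (hσ : σ ≠ 0) :
    Real.exp ζ * stdNormalPDF (dMinus ζ t x σ) = Real.exp x * stdNormalPDF (dPlus ζ t x σ) := by
  have hsqrt : Real.sqrt t ^ 2 = t := Real.sq_sqrt ht.le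
  have : Real.sqrt t ≠ 0 := (Real.sqrt_pos.2 ht).ne'
  simp only [stdNormalPDF, mul_div_assoc', ← Real.exp_add, dPlus, dMinus]
  congr 2
  -- `d₊² - d₋² = 2 (x - ζ)`
  field_simp
  rw [hsqrt]
  ring

lemma hasDerivAt_dPlus_fst : HasDerivAt (dPlus ζ t · σ) (1 / (σ * Real.sqrt t)) x := by
  simpa [dPlus] using (((hasDerivAt_id x).sub_const ζ).add_const (σ ^ 2 * t / 2)).div_const
    (σ * Real.sqrt t)

lemma hasDerivAt_dMinus_fst : HasDerivAt (dMinus ζ t · σ) (1 / (σ * Real.sqrt t)) x := by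
  simpa [dMinus] using (((hasDerivAt_id x).sub_const ζ).sub_const (σ ^ 2 * t / 2)).div_const
    (σ * Real.sqrt t)

lemma hasDerivAt_uBS_fst (ht : 0 < t) (hσ : σ ≠ 0) :
    HasDerivAt (uBS ζ t · σ) (Real.exp x * stdNormalCDF (dPlus ζ t x σ)) x := by
  have h := ((Real.hasDerivAt_exp x).fun_mul
    (hasDerivAt_dPlus_fst (ζ := ζ) (t := t) (σ := σ)).stdNormalCDF).fun_sub
    ((hasDerivAt_dMinus_fst (ζ := ζ) (t := t) (σ := σ)).stdNormalCDF.const_mul (Real.exp ζ))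
  refine h.congr_deriv ?_
  linear_combination (-(1 / (σ * Real.sqrt t))) * exp_mul_stdNormalPDF_dMinus (x := x) ht hσ

lemma Lop_uBS (ht : 0 < t) (hσ : σ ≠ 0) :
    Lop t (uBS ζ t · σ) x =
      t * (Real.exp x * stdNormalPDF (dPlus ζ t x σ) / (σ * Real.sqrt t)) := by
  have hfst : deriv (uBS ζ t · σ) = fun x' => Real.exp x' * stdNormalCDF (dPlus ζ t x' σ) :=
    funext fun _ => (hasDerivAt_uBS_fst ht hσ).deriv
  have hsnd := (Real.hasDerivAt_exp x).fun_mul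
    (hasDerivAt_dPlus_fst (ζ := ζ) (t := t) (σ := σ)).stdNormalCDF
  rw [Lop_apply, hfst, hsnd.deriv]
  ring

lemma hasDerivAt_dPlus_snd (ht : 0 < t) (hσ : σ ≠ 0) :
    HasDerivAt (dPlus ζ t x ·) (-(x - ζ) / (σ ^ 2 * Real.sqrt t) + Real.sqrt t / 2) σ := by
  have h := (((hasDerivAt_id σ).pow 2).mul_const t).div_const 2 |>.const_add (x - ζ) |>.div
    ((hasDerivAt_id σ).mul_const (Real.sqrt t)) (mul_ne_zero hσ (Real.sqrt_pos.2 ht).ne')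
  have : Real.sqrt t ≠ 0 := (Real.sqrt_pos.2 ht).ne'
  refine h.congr_deriv ?_
  simp only [id, Pi.pow_apply]
  field_simp
  rw [Real.sq_sqrt ht.le]
  ring

lemma hasDerivAt_dMinus_snd (ht : 0 < t) (hσ : σ ≠ 0) :
    HasDerivAt (dMinus ζ t x ·) (-(x - ζ) / (σ ^ 2 * Real.sqrt t) - Real.sqrt t / 2) σ := by
  have h := (((hasDerivAt_id σ).pow 2).mul_const t).div_const 2 |>.const_sub (x - ζ) |>.div
    ((hasDerivAt_id σ).mul_const (Real.sqrt t)) (mul_ne_zero hσ (Real.sqrt_pos.2 ht).ne')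
  have : Real.sqrt t ≠ 0 := (Real.sqrt_pos.2 ht).ne'
  refine h.congr_deriv ?_
  simp only [id, Pi.pow_apply]
  field_simp
  rw [Real.sq_sqrt ht.le]
  ring

lemma hasDerivAt_uBS_snd (ht : 0 < t) (hσ : σ ≠ 0) :
    HasDerivAt (uBS ζ t x ·) (Real.exp x * stdNormalPDF (dPlus ζ t x σ) * Real.sqrt t) σ := by
  have h := ((hasDerivAt_dPlus_snd (ζ := ζ) (x := x) ht hσ).stdNormalCDF.const_mul
    (Real.exp x)).fun_sub
    ((hasDerivAt_dMinus_snd (ζ := ζ) (x := x) ht hσ).stdNormalCDF.const_mul (Real.exp ζ))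
  refine h.congr_deriv ?_
  linear_combination (-(-(x - ζ) / (σ ^ 2 * Real.sqrt t) - Real.sqrt t / 2)) *
    exp_mul_stdNormalPDF_dMinus (x := x) ht hσ

/-- The Vega-Gamma relation. -/
lemma deriv_uBS_snd (ht : 0 < t) (hσ : σ ≠ 0) :
    deriv (uBS ζ t x ·) σ = σ * Lop t (uBS ζ t · σ) x := by
  have hsqrt : Real.sqrt t ^ 2 = t := Real.sq_sqrt ht.le
  have : Real.sqrt t ≠ 0 := (Real.sqrt_pos.2 ht).ne'
  rw [(hasDerivAt_uBS_snd ht hσ).deriv, Lop_uBS ht hσ]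
  field_simp
  rw [hsqrt]

lemma contDiffOn_uBS (ht : 0 < t) :
    ContDiffOn ℝ ∞ (uncurry fun x s => uBS ζ t x s) (univ ×ˢ Ioi 0) := by
  have hden : ∀ p ∈ (univ : Set ℝ) ×ˢ Ioi (0 : ℝ), p.2 * Real.sqrt t ≠ 0 :=
    fun p hp => mul_ne_zero (ne_of_gt hp.2) (Real.sqrt_pos.2 ht).ne'
  simp only [uncurry_def, uBS]
  refine ((Real.contDiff_exp.comp_contDiffOn contDiffOn_fst).mul
    (contDiff_stdNormalCDF.comp_contDiffOn ?_)).sub (contDiffOn_const.mul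
    (contDiff_stdNormalCDF.comp_contDiffOn ?_)) <;>
  exact ContDiffOn.div (by fun_prop) (by fun_prop) hden

lemma hasDerivAt_iterate_Lop_uBS (ht : 0 < t) (hσ : 0 < σ) (k : ℕ) :
    HasDerivAt (fun s => (Lop t)^[k] (uBS ζ t · s) x)
      (σ * (Lop t)^[k + 1] (uBS ζ t · σ) x) σ := by
  have h := hasDerivAt_snd_iterate_Lop (t := t) (contDiffOn_uBS (ζ := ζ) ht) isOpen_Ioi k
    (x := x) hσ
  rwa [funext fun x' => deriv_uBS_snd ht hσ.ne', iterate_Lop_const_mul,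
    ← iterate_succ_apply] at h

end BlackScholes

section Coefficients

open Finset

lemma ccoef_zero_right (n : ℕ) : ccoef n 0 = 1 := by cases n <;> rfl

lemma ccoef_eq_zero_of_lt {n q : ℕ} (h : n / 2 < q) : ccoef n q = 0 := by
  match n, q with
  | n, 0 => omega
  | 0, q + 1 => rfl
  | n + 1, q + 1 => rw [ccoef, if_neg (by omega)]

lemma ccoef_succ_succ (n q : ℕ) :
    ccoef (n + 1) (q + 1) = ((n : ℝ) - 2 * q) * ccoef n q + ccoef n (q + 1) := by
  rw [ccoef]
  split_ifs with h
  · ring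
  · rw [ccoef_eq_zero_of_lt (show n / 2 < q + 1 by omega)]
    rcases (show n / 2 < q ∨ n = 2 * q by omega) with hq | rfl
    · simp [ccoef_eq_zero_of_lt hq]
    · push_cast; ring

lemma ccoef_mul_cast_sub (n q : ℕ) :
    ccoef n q * ((n - 2 * q : ℕ) : ℝ) = ccoef n q * ((n : ℝ) - 2 * q) := by
  rcases le_or_gt (2 * q) n with h | h
  · push_cast [h]; ring
  · simp [ccoef_eq_zero_of_lt (show n / 2 < q by omega)]

lemma sum_range_ccoef_eq {n N : ℕ} (hN : n / 2 < N) (f : ℕ → ℝ) :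
    ∑ q ∈ range (n / 2 + 1), ccoef n q * f q = ∑ q ∈ range N, ccoef n q * f q :=
  sum_subset (range_subset_range.2 hN) fun q _ hq => by
    rw [ccoef_eq_zero_of_lt (by simpa using hq), zero_mul]

/-- The left-hand side is the `σ`-derivative of `∑_q c_{n,n-2q} σ^{n-2q} W_{n-q}` when
`∂_σ W_j = σ W_{j+1}`. -/
lemma sum_ccoef_succ (n : ℕ) (σ : ℝ) (W : ℕ → ℝ) :
    ∑ q ∈ range (n / 2 + 1), ccoef n q *
        (((n - 2 * q : ℕ) : ℝ) * σ ^ (n - 2 * q - 1) * W (n - q) +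
          σ ^ (n - 2 * q) * (σ * W (n - q + 1))) =
      ∑ q ∈ range ((n + 1) / 2 + 1), ccoef (n + 1) q * σ ^ (n + 1 - 2 * q) * W (n + 1 - q) := by
  set r : ℕ → ℝ := fun q => σ ^ (n + 1 - 2 * q) * W (n + 1 - q)
  have hfirst : ∀ q, ccoef n q * (((n - 2 * q : ℕ) : ℝ) * σ ^ (n - 2 * q - 1) * W (n - q)) =
      ((n : ℝ) - 2 * q) * ccoef n q * r (q + 1) := by
    intro q
    simp only [r, show n + 1 - 2 * (q + 1) = n - 2 * q - 1 by omega,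
      show n + 1 - (q + 1) = n - q by omega, ← mul_assoc, ccoef_mul_cast_sub]
    ring
  have hsecond : ∀ q, ccoef n (q + 1) * (σ ^ (n - 2 * (q + 1)) * (σ * W (n - (q + 1) + 1))) =
      ccoef n (q + 1) * r (q + 1) := by
    intro q
    rcases le_or_gt (2 * (q + 1)) n with h | h
    · simp only [r, ← mul_assoc, ← pow_succ,
        show n - 2 * (q + 1) + 1 = n + 1 - 2 * (q + 1) by omega,
        show n - (q + 1) + 1 = n + 1 - (q + 1) by omega]
    · simp [ccoef_eq_zero_of_lt (show n / 2 < q + 1 by omega)]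
  simp only [mul_assoc (ccoef (n + 1) _)]
  rw [sum_range_ccoef_eq (N := n + 2) (by omega), sum_range_ccoef_eq (N := n + 2) (by omega)]
  simp only [mul_add, sum_add_distrib]
  rw [sum_range_succ (fun q => ccoef n q * _), ccoef_eq_zero_of_lt (show n / 2 < n + 1 by omega),
    sum_range_succ' (fun q => ccoef n q * (σ ^ (n - 2 * q) * _)),
    sum_range_succ' (fun q => ccoef (n + 1) q * r q)]
  simp only [hfirst, hsecond, ccoef_succ_succ, ccoef_zero_right, r, mul_zero, Nat.sub_zero,
    add_mul, sum_add_distrib, pow_succ]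
  ring

end Coefficients

lemma hasDerivAt_sum_ccoef_iterate_Lop_uBS {ζ t x σ : ℝ} (ht : 0 < t) (hσ : 0 < σ) (n : ℕ) :
    HasDerivAt (fun s => ∑ q ∈ Finset.range (n / 2 + 1),
        ccoef n q * s ^ (n - 2 * q) * (Lop t)^[n - q] (uBS ζ t · s) x)
      (∑ q ∈ Finset.range ((n + 1) / 2 + 1),
        ccoef (n + 1) q * σ ^ (n + 1 - 2 * q) * (Lop t)^[n + 1 - q] (uBS ζ t · σ) x) σ := by
  rw [← sum_ccoef_succ n σ fun j => (Lop t)^[j] (uBS ζ t · σ) x]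
  refine HasDerivAt.fun_sum fun q _ => ?_
  refine (((hasDerivAt_pow (n - 2 * q) σ).const_mul (ccoef n q)).mul
    (hasDerivAt_iterate_Lop_uBS ht hσ (n - q))).congr_deriv ?_
  ring

theorem sigma_derivatives_via_L_general (ζ t x σ : ℝ) (ht : 0 < t) (hσ : 0 < σ)
    (n : ℕ) :
    iteratedDeriv n (fun s => uBS ζ t x s) σ =
      ∑ q ∈ Finset.range (n / 2 + 1),
        ccoef n q * σ ^ (n - 2 * q) * (Lop t)^[n - q] (fun x' => uBS ζ t x' σ) x := by
  induction n generalizing σ with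
  | zero => simp [ccoef_zero_right]
  | succ n ih =>
    have hsum : iteratedDeriv n (fun s => uBS ζ t x s) =ᶠ[𝓝 σ]
        fun s => ∑ q ∈ Finset.range (n / 2 + 1),
          ccoef n q * s ^ (n - 2 * q) * (Lop t)^[n - q] (fun x' => uBS ζ t x' s) x :=
      eventually_of_mem (Ioi_mem_nhds hσ) fun s hs => ih s hs
    rw [iteratedDeriv_succ, hsum.deriv_eq, (hasDerivAt_sum_ccoef_iterate_Lop_uBS ht hσ n).deriv]

theorem sigma_derivatives_via_L (ζ t x σ : ℝ) (ht : 0 < t) (hσ : 0 < σ)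
    (n : ℕ) (hn : 1 ≤ n) :
    iteratedDeriv n (fun s => uBS ζ t x s) σ =
      ∑ q ∈ Finset.range (n / 2 + 1),
        ccoef n q * σ ^ (n - 2 * q) * (Lop t)^[n - q] (fun x' => uBS ζ t x' σ) x :=
  sigma_derivatives_via_L_general ζ t x σ ht hσ n
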